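/- ∫_0^1 (1/2)(arsinh u)^2/√(1-u^2) du = π^3/96. -/

import Mathlib

open Real Finset MeasureTheory



noncomputable def W (n : ℕ) : ℝ := ∏ i ∈ Finset.range n, ((2*i+1 : ℝ)/(2*i+2))

lemma W_pos (n : ℕ) : 0 < W n := by
  apply Finset.prod_pos; intro i _; positivity

lemma W_succ (n : ℕ) : W (n+1) = W n * ((2*n+1)/(2*n+2)) := by
  rw [W, Finset.prod_range_succ]; rfl

lemma W_ge (n : ℕ) : 1 ≤ (2*n+1) * W n := by
  induction n with
  | zero => simp [W]
  | succ m ih =>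
      rw [W_succ]
      have h1 : (0:ℝ) < 2*m+1 := by positivity
      have h2 : (0:ℝ) < 2*m+2 := by positivity
      have hW := W_pos m
      have : (1:ℝ) ≤ (2*m+3)/(2*m+2) * ((2*m+1) * W m) := by
        calc (1:ℝ) ≤ (2*m+1) * W m := ih
        _ ≤ (2*m+3)/(2*m+2) * ((2*m+1) * W m) := by
            nth_rewrite 1 [← one_mul ((2*(m:ℝ)+1) * W m)]
            apply mul_le_mul_of_nonneg_right _ (by positivity)
            rw [le_div_iff₀ h2]; linarith
      calc (1:ℝ) ≤ (2*m+3)/(2*m+2) * ((2*m+1) * W m) := this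
      _ = (2*↑(m+1)+1) * (W m * ((2*m+1)/(2*m+2))) := by push_cast; ring

lemma W_le_one (n : ℕ) : W n ≤ 1 := by
  induction n with
  | zero => simp [W]
  | succ m ih =>
      rw [W_succ]
      have h2 : (0:ℝ) < 2*m+2 := by positivity
      calc W m * ((2*m+1)/(2*m+2)) ≤ 1 * 1 := by
            apply mul_le_mul ih _ (by positivity) zero_le_one
            rw [div_le_one h2]; linarith
      _ = 1 := by ring

noncomputable def cc (n : ℕ) : ℝ := (-1)^n / (2*(n+1)^2 * W (n+1))

lemma cc_zero : cc 0 = 1 := by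
  simp [cc, W, Finset.prod_range_succ]

lemma cc_abs (n : ℕ) : |cc n| ≤ 2 / (n+1) := by
  have hW := W_pos (n+1)
  have hWg := W_ge (n+1)
  rw [cc, abs_div, abs_pow, abs_neg, abs_one, one_pow]
  rw [abs_of_pos (by positivity)]
  rw [div_le_div_iff₀ (by positivity) (by positivity)]
  have h1 : (1:ℝ) * ((n:ℝ)+1) ≤ ((2*((n:ℝ)+1)+1) * W (n+1)) * ((n:ℝ)+1) := by
    apply mul_le_mul_of_nonneg_right _ (by positivity)
    push_cast at hWg ⊢; linarith
  push_cast at h1 ⊢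
  nlinarith [hW, sq_nonneg ((n:ℝ)+1)]

lemma cc_rec (n : ℕ) : cc (n+1) * ((2*n+4)*(2*n+3)) = -(cc n * ((2*n+2)^2)) := by
  have h1 : W (n+2) = W (n+1) * ((2*(n+1:ℝ)+1)/(2*(n+1:ℝ)+2)) := by
    have := W_succ (n+1); push_cast at this ⊢; linarith
  have hW := W_pos (n+1)
  simp only [cc, h1, pow_succ]
  push_cast
  field_simp
  ring



noncomputable def gg (x : ℝ) : ℝ := ∑' n : ℕ, cc n * x^(2*n+2)
noncomputable def hh (x : ℝ) : ℝ := ∑' n : ℕ, cc n * ((2*n+2) * x^(2*n+1))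
noncomputable def kk (x : ℝ) : ℝ := ∑' n : ℕ, cc n * (((2*n+2)*(2*n+1)) * x^(2*n))

lemma base_summable {r : ℝ} (h0 : 0 ≤ r) (h1 : r < 1) (C : ℝ) :
    Summable (fun n : ℕ => C*(n+1)*(r^2)^n) := by
  have hr2 : ‖r^2‖ < 1 := by
    rw [Real.norm_eq_abs, abs_of_nonneg (by positivity)]
    nlinarith
  have h := summable_pow_mul_geometric_of_norm_lt_one 1 hr2 (R := ℝ)
  simp only [pow_one] at h
  have h2 : Summable (fun n : ℕ => (r^2)^n) := summable_geometric_of_norm_lt_one hr2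
  have := (h.add h2).mul_left C
  refine this.congr fun n => by ring

lemma gterm_bound (n : ℕ) {x r : ℝ} (hx : |x| ≤ r) :
    ‖cc n * x^(2*n+2)‖ ≤ 2*(n+1)*(r^2)^n * r^2 := by
  have h0 : (0:ℝ) ≤ r := le_trans (abs_nonneg x) hx
  have hb : |x|^(2*n+2) ≤ r^(2*n+2) := pow_le_pow_left₀ (abs_nonneg x) hx _
  have hc := cc_abs n
  rw [norm_mul, norm_pow, Real.norm_eq_abs, Real.norm_eq_abs]
  calc |cc n| * |x|^(2*n+2) ≤ (2/(n+1)) * r^(2*n+2) := by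
        apply mul_le_mul hc hb (by positivity) (by positivity)
  _ ≤ 2*(n+1)*(r^2)^n * r^2 := by
      rw [← pow_mul, mul_comm 2 n]
      have hsplit : r^(n*2+2) = r^(n*2)*r^2 := by rw [← pow_add]
      rw [hsplit]
      have h1 : (0:ℝ) < (n:ℝ)+1 := by positivity
      have h2 : 2/((n:ℝ)+1) ≤ 2*((n:ℝ)+1) := by
        rw [div_le_iff₀ h1]; nlinarith
      have h3 := pow_nonneg h0 (n*2)
      have h4 : (0:ℝ) ≤ r^2 := by positivity
      nlinarith [mul_le_mul_of_nonneg_right h2 (mul_nonneg h3 h4)]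

lemma hterm_bound (n : ℕ) {x r : ℝ} (hx : |x| ≤ r) (hr : r ≤ 1) :
    ‖cc n * ((2*n+2) * x^(2*n+1))‖ ≤ 4*(n+1)*(r^2)^n := by
  have h0 : (0:ℝ) ≤ r := le_trans (abs_nonneg x) hx
  have hb : |x|^(2*n+1) ≤ r^(2*n+1) := pow_le_pow_left₀ (abs_nonneg x) hx _
  have hc := cc_abs n
  have h1 : (0:ℝ) < (n:ℝ)+1 := by positivity
  rw [norm_mul, norm_mul, norm_pow, Real.norm_eq_abs, Real.norm_eq_abs, Real.norm_eq_abs]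
  have habs : |(2*(n:ℝ)+2)| = 2*(n:ℝ)+2 := abs_of_pos (by positivity)
  rw [habs]
  calc |cc n| * ((2*(n:ℝ)+2) * |x|^(2*n+1))
      ≤ (2/(n+1)) * ((2*(n:ℝ)+2) * r^(2*n+1)) := by
        apply mul_le_mul hc _ (by positivity) (by positivity)
        exact mul_le_mul_of_nonneg_left hb (by positivity)
  _ = 4 * (r^(n*2) * r) := by field_simp; ring
  _ ≤ 4*(n+1)*(r^2)^n := by
      rw [← pow_mul, mul_comm 2 n]
      have hr1 : r^(n*2) * r ≤ r^(n*2) * 1 := by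
        apply mul_le_mul_of_nonneg_left hr (by positivity)
      nlinarith [pow_nonneg h0 (n*2)]

lemma kterm_bound (n : ℕ) {x r : ℝ} (hx : |x| ≤ r) :
    ‖cc n * (((2*n+2)*(2*n+1)) * x^(2*n))‖ ≤ 12*(n+1)*(r^2)^n := by
  have h0 : (0:ℝ) ≤ r := le_trans (abs_nonneg x) hx
  have hb : |x|^(2*n) ≤ r^(2*n) := pow_le_pow_left₀ (abs_nonneg x) hx _
  have hc := cc_abs n
  have h1 : (0:ℝ) < (n:ℝ)+1 := by positivity
  rw [norm_mul, norm_mul, norm_pow, Real.norm_eq_abs, Real.norm_eq_abs, Real.norm_eq_abs]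
  have habs : |(2*(n:ℝ)+2)*(2*(n:ℝ)+1)| = (2*(n:ℝ)+2)*(2*(n:ℝ)+1) := abs_of_pos (by positivity)
  rw [habs]
  calc |cc n| * ((2*(n:ℝ)+2)*(2*(n:ℝ)+1) * |x|^(2*n))
      ≤ (2/(n+1)) * ((2*(n:ℝ)+2)*(2*(n:ℝ)+1) * r^(2*n)) := by
        apply mul_le_mul hc _ (by positivity) (by positivity)
        exact mul_le_mul_of_nonneg_left hb (by positivity)
  _ = (4*(2*(n:ℝ)+1)) * r^(n*2) := by field_simp; ring
  _ ≤ 12*(n+1)*(r^2)^n := by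
      rw [← pow_mul, mul_comm 2 n]
      have := pow_nonneg h0 (n*2)
      nlinarith

lemma summable_g {x : ℝ} (hx : |x| < 1) : Summable (fun n : ℕ => cc n * x^(2*n+2)) := by
  apply Summable.of_norm
  apply Summable.of_nonneg_of_le (fun n => norm_nonneg _) (fun n => gterm_bound n le_rfl)
  exact ((base_summable (abs_nonneg x) hx 2).mul_right _)

lemma summable_h {x : ℝ} (hx : |x| < 1) : Summable (fun n : ℕ => cc n * ((2*n+2) * x^(2*n+1))) := by
  apply Summable.of_norm
  exact Summable.of_nonneg_of_le (fun n => norm_nonneg _)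
    (fun n => hterm_bound n le_rfl hx.le) (base_summable (abs_nonneg x) hx 4)

lemma summable_k {x : ℝ} (hx : |x| < 1) :
    Summable (fun n : ℕ => cc n * (((2*n+2)*(2*n+1)) * x^(2*n))) := by
  apply Summable.of_norm
  exact Summable.of_nonneg_of_le (fun n => norm_nonneg _)
    (fun n => kterm_bound n le_rfl) (base_summable (abs_nonneg x) hx 12)

lemma hasDerivAt_gg {x : ℝ} (hx : |x| < 1) : HasDerivAt gg (hh x) x := by
  set r := (1+|x|)/2 with hr
  have h0 : 0 ≤ r := by positivity
  have h1 : r < 1 := by simp only [hr]; linarith [abs_nonneg x]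
  have hxr : |x| < r := by simp only [hr]; linarith
  apply hasDerivAt_tsum_of_isPreconnected (base_summable h0 h1 4)
    (Metric.isOpen_ball (x := (0:ℝ)) (ε := r)) (convex_ball 0 r).isPreconnected
    (g := fun n x => cc n * x^(2*n+2)) (g' := fun n x => cc n * ((2*n+2) * x^(2*n+1)))
    (y₀ := 0) (y := x)
  · intro n y _
    have := ((hasDerivAt_pow (2*n+2) y).const_mul (cc n))
    refine this.congr_deriv ?_
    push_cast; ring_nf
  · intro n y hy
    rw [Metric.mem_ball, dist_zero_right, Real.norm_eq_abs] at hy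
    exact hterm_bound n hy.le h1.le
  · rw [Metric.mem_ball, dist_zero_right, norm_zero]; positivity
  · apply summable_of_ne_finset_zero (s := ∅)
    intro n _; simp
  · rw [Metric.mem_ball, dist_zero_right, Real.norm_eq_abs]; exact hxr

lemma hasDerivAt_hh {x : ℝ} (hx : |x| < 1) : HasDerivAt hh (kk x) x := by
  set r := (1+|x|)/2 with hr
  have h0 : 0 ≤ r := by positivity
  have h1 : r < 1 := by simp only [hr]; linarith [abs_nonneg x]
  have hxr : |x| < r := by simp only [hr]; linarith
  apply hasDerivAt_tsum_of_isPreconnected (base_summable h0 h1 12)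
    (Metric.isOpen_ball (x := (0:ℝ)) (ε := r)) (convex_ball 0 r).isPreconnected
    (g := fun n x => cc n * ((2*n+2) * x^(2*n+1)))
    (g' := fun n x => cc n * (((2*n+2)*(2*n+1)) * x^(2*n)))
    (y₀ := 0) (y := x)
  · intro n y _
    have := (((hasDerivAt_pow (2*n+1) y).const_mul ((2*(n:ℝ)+2))).const_mul (cc n))
    refine this.congr_deriv ?_
    push_cast; ring_nf
  · intro n y hy
    rw [Metric.mem_ball, dist_zero_right, Real.norm_eq_abs] at hy
    exact kterm_bound n hy.le
  · rw [Metric.mem_ball, dist_zero_right, norm_zero]; positivity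
  · apply summable_of_ne_finset_zero (s := ∅)
    intro n _; simp
  · rw [Metric.mem_ball, dist_zero_right, Real.norm_eq_abs]; exact hxr


lemma hh_zero : hh 0 = 0 := by
  have : ∀ n : ℕ, cc n * ((2*(n:ℝ)+2) * (0:ℝ)^(2*n+1)) = 0 := by
    intro n; simp
  simp only [hh, this, tsum_zero]

lemma gg_zero : gg 0 = 0 := by
  have : ∀ n : ℕ, cc n * (0:ℝ)^(2*n+2) = 0 := by
    intro n; simp
  simp only [gg, this, tsum_zero]

lemma ode {x : ℝ} (hx : |x| < 1) : (1+x^2) * kk x + x * hh x = 2 := by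
  have Sk := summable_k hx
  have Sh := summable_h hx
  have Sk' : Summable (fun n : ℕ => x^2 * (cc n * (((2*n+2)*(2*n+1)) * x^(2*n)))) :=
    Sk.mul_left _
  have Sh' : Summable (fun n : ℕ => x * (cc n * ((2*n+2) * x^(2*n+1)))) := Sh.mul_left _
  have hk0 : kk x = 2 + ∑' n : ℕ, cc (n+1) * (((2*(n+1)+2)*(2*(n+1)+1)) * x^(2*(n+1))) := by
    rw [kk, Sk.tsum_eq_zero_add]
    congr 1
    · norm_num [cc_zero]
    · exact tsum_congr fun b => by push_cast; ring
  have hx2 : x^2 * kk x = ∑' n : ℕ, x^2 * (cc n * (((2*n+2)*(2*n+1)) * x^(2*n))) := by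
    rw [kk, tsum_mul_left]
  have hxh : x * hh x = ∑' n : ℕ, x * (cc n * ((2*n+2) * x^(2*n+1))) := by
    rw [hh, tsum_mul_left]
  have key : ∀ n : ℕ, cc (n+1) * (((2*(n+1)+2)*(2*(n+1)+1)) * x^(2*(n+1)))
      = -(x^2 * (cc n * (((2*n+2)*(2*n+1)) * x^(2*n))) + x * (cc n * ((2*n+2) * x^(2*n+1)))) := by
    intro n
    have h := cc_rec n
    push_cast at h ⊢
    have e1 : x^(2*(n+1)) = x^(2*n) * x^2 := by rw [← pow_add]; ring_nf
    have e2 : x^(2*n+1) = x^(2*n) * x := by rw [← pow_succ]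
    rw [e1, e2]
    linear_combination (x^(2*n) * x^2) * h
  have htail : (∑' n : ℕ, cc (n+1) * (((2*(n+1)+2)*(2*(n+1)+1)) * x^(2*(n+1))))
      = -(x^2 * kk x + x * hh x) := by
    rw [hx2, hxh, ← Sk'.tsum_add Sh', ← tsum_neg]
    exact tsum_congr key
  have hsplit : (1+x^2) * kk x + x * hh x = kk x + (x^2*kk x + x*hh x) := by ring
  rw [hsplit]; linarith [hk0, htail]

lemma abs_le_of_uIcc {x y : ℝ} (hy : y ∈ Set.uIcc 0 x) : |y| ≤ |x| := by
  rcases Set.mem_uIcc.mp hy with ⟨h1, h2⟩ | ⟨h1, h2⟩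
  · rw [abs_of_nonneg h1, abs_of_nonneg (h1.trans h2)]; exact h2
  · rw [abs_of_nonpos h2, abs_of_nonpos (h1.trans h2)]; linarith

lemma hh_eq {x : ℝ} (hx : |x| < 1) : Real.sqrt (1+x^2) * hh x = 2 * Real.arsinh x := by
  set F : ℝ → ℝ := fun y => Real.sqrt (1+y^2) * hh y - 2 * Real.arsinh y with hF
  have key : ∀ y ∈ Set.uIcc 0 x, HasDerivAt F 0 y := by
    intro y hy
    have hy1 : |y| < 1 := lt_of_le_of_lt (abs_le_of_uIcc hy) hx
    have hpos : (0:ℝ) < 1 + y^2 := by positivity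
    set s := Real.sqrt (1+y^2) with hs
    have hspos : 0 < s := Real.sqrt_pos.mpr hpos
    have hs2 : s^2 = 1+y^2 := Real.sq_sqrt hpos.le
    have d1 : HasDerivAt (fun y : ℝ => Real.sqrt (1+y^2)) (y / s) y := by
      have hin : HasDerivAt (fun y : ℝ => 1+y^2) (2*y) y := by
        have := (hasDerivAt_pow 2 y).const_add 1
        simpa using this
      have := (Real.hasDerivAt_sqrt hpos.ne').comp y hin
      refine this.congr_deriv ?_
      rw [hs]
      ring
    have d2 := hasDerivAt_hh hy1
    have d3 := Real.hasDerivAt_arsinh y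
    have hd : HasDerivAt F ((y/s) * hh y + s * kk y - 2 * (Real.sqrt (1+y^2))⁻¹) y :=
      (d1.mul d2).sub (d3.const_mul 2)
    convert hd using 1
    have hODE := ode hy1
    rw [← hs]
    field_simp
    rw [hs2]
    linarith [hODE]
  have hFTC := intervalIntegral.integral_eq_sub_of_hasDerivAt key
    (intervalIntegrable_const (c := (0:ℝ)))
  simp only [intervalIntegral.integral_const, smul_zero, sub_zero] at hFTC
  have hF0 : F 0 = 0 := by
    simp [hF, hh_zero, Real.arsinh_zero]
  have hFx : F x = 0 := by
    rw [eq_comm] at hFTC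
    have := hFTC
    rw [hF0] at this
    linarith [this]
  have := hFx
  simp only [hF] at this
  linarith [this]

lemma gg_eq {x : ℝ} (hx : |x| < 1) : gg x = (Real.arsinh x)^2 := by
  set G : ℝ → ℝ := fun y => gg y - (Real.arsinh y)^2 with hG
  have key : ∀ y ∈ Set.uIcc 0 x, HasDerivAt G 0 y := by
    intro y hy
    have hy1 : |y| < 1 := lt_of_le_of_lt (abs_le_of_uIcc hy) hx
    have hpos : (0:ℝ) < 1 + y^2 := by positivity
    have hspos : 0 < Real.sqrt (1+y^2) := Real.sqrt_pos.mpr hpos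
    have d1 := hasDerivAt_gg hy1
    have d2 : HasDerivAt (fun y : ℝ => (Real.arsinh y)^2)
        (2 * Real.arsinh y * (Real.sqrt (1+y^2))⁻¹) y := by
      have := (Real.hasDerivAt_arsinh y).pow 2
      refine this.congr_deriv ?_
      push_cast; ring
    have hd : HasDerivAt G (hh y - 2 * Real.arsinh y * (Real.sqrt (1+y^2))⁻¹) y := d1.sub d2
    convert hd using 1
    have := hh_eq hy1
    field_simp
    linarith [this]
  have hFTC := intervalIntegral.integral_eq_sub_of_hasDerivAt key
    (intervalIntegrable_const (c := (0:ℝ)))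
  simp only [intervalIntegral.integral_const, smul_zero, sub_zero] at hFTC
  have hG0 : G 0 = 0 := by simp [hG, gg_zero, Real.arsinh_zero]
  have hGx : G x = 0 := by linarith [hFTC, hG0]
  simp only [hG] at hGx
  linarith [hGx]


lemma alt_sum : HasSum (fun n : ℕ => (-1:ℝ)^n / ((n:ℝ)+1)^2) (π^2/12) := by
  have hz : HasSum (fun n : ℕ => (1:ℝ) / (n:ℝ)^2) (π^2/6) := hasSum_zeta_two
  have he : HasSum (fun k : ℕ => (1:ℝ) / ((2*(k:ℕ) : ℕ):ℝ)^2) (π^2/24) := by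
    have h := hz.mul_left (1/4)
    have hfe : (fun n : ℕ => (1/4) * ((1:ℝ)/(n:ℝ)^2))
        = (fun k : ℕ => (1:ℝ) / ((2*(k:ℕ) : ℕ):ℝ)^2) := by
      funext n
      push_cast
      rw [mul_pow, div_mul_div_comm]
      norm_num
    rw [show (π^2/24:ℝ) = (1/4)*(π^2/6) by ring]
    exact hfe ▸ h
  have hos0 : Summable ((fun n : ℕ => (1:ℝ) / (n:ℝ)^2) ∘ (fun k : ℕ => 2*k+1)) :=
    hz.summable.comp_injective (fun a b hab => by omega)
  have hos : Summable (fun k : ℕ => (1:ℝ) / ((2*(k:ℕ)+1 : ℕ):ℝ)^2) := hos0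
  have ho := hos.hasSum
  have htot := HasSum.even_add_odd (f := fun n : ℕ => (1:ℝ) / (n:ℝ)^2) he ho
  have hval : (∑' k : ℕ, (1:ℝ) / ((2*(k:ℕ)+1 : ℕ):ℝ)^2) = π^2/8 := by
    have := htot.unique hz
    linarith
  rw [hval] at ho
  have hes : HasSum (fun k : ℕ => (1:ℝ) / ((2*((k:ℕ)+1) : ℕ):ℝ)^2) (π^2/24) := by
    apply (hasSum_nat_add_iff (f := fun k : ℕ => (1:ℝ) / ((2*(k:ℕ) : ℕ):ℝ)^2) 1).mpr
    simpa using he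
  have hE : HasSum (fun k : ℕ => (-1:ℝ)^(2*k) / (((2*k : ℕ):ℝ)+1)^2) (π^2/8) := by
    have hfe : (fun k : ℕ => (1:ℝ) / ((2*(k:ℕ)+1 : ℕ):ℝ)^2)
        = (fun k : ℕ => (-1:ℝ)^(2*k) / (((2*k : ℕ):ℝ)+1)^2) := by
      funext k
      rw [pow_mul]
      push_cast
      norm_num
    exact hfe ▸ ho
  have hO : HasSum (fun k : ℕ => (-1:ℝ)^(2*k+1) / (((2*k+1 : ℕ):ℝ)+1)^2) (-(π^2/24)) := by
    have hfo : (fun k : ℕ => -((1:ℝ) / ((2*((k:ℕ)+1) : ℕ):ℝ)^2))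
        = (fun k : ℕ => (-1:ℝ)^(2*k+1) / (((2*k+1 : ℕ):ℝ)+1)^2) := by
      funext k
      have hm : ((-1:ℝ))^(2*k+1) = -1 := by
        rw [pow_succ, pow_mul]; norm_num
      rw [hm]
      push_cast
      ring
    exact hfo ▸ hes.neg
  have goal := HasSum.even_add_odd (f := fun n : ℕ => (-1:ℝ)^n / ((n:ℝ)+1)^2) hE hO
  have : π^2/8 + -(π^2/24) = π^2/12 := by ring
  rw [this] at goal
  exact goal




lemma cc_mul_W (n : ℕ) : cc n * W (n+1) = (-1)^n / (2*((n:ℝ)+1)^2) := by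
  rw [cc]
  have h := (W_pos (n+1)).ne'
  field_simp

lemma abs_cc_mul_W (n : ℕ) : |cc n| * W (n+1) = 1 / (2*((n:ℝ)+1)^2) := by
  have h := W_pos (n+1)
  rw [cc, abs_div, abs_pow, abs_neg, abs_one, one_pow, abs_of_pos (by positivity)]
  field_simp

lemma integral_sin_pow_halfpi (m : ℕ) :
    ∫ θ in (0:ℝ)..(π/2), Real.sin θ ^ (2*m) = (π/2) * W m := by
  induction m with
  | zero => simp [W]
  | succ k ih =>
      have h := integral_sin_pow (a := 0) (b := π/2) (2*k)
      have e : 2*(k+1) = 2*k+2 := by ring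
      rw [e, h, Real.sin_zero, Real.cos_pi_div_two, ih, W_succ]
      simp
      push_cast
      ring

lemma sin_image : Real.sin '' Set.Ioo 0 (π/2) = Set.Ioo 0 1 := by
  ext u
  constructor
  · rintro ⟨θ, hθ, rfl⟩
    obtain ⟨h1, h2⟩ := hθ
    constructor
    · exact Real.sin_pos_of_pos_of_lt_pi h1 (h2.trans (by linarith [Real.pi_pos]))
    · have : Real.sin θ < Real.sin (π/2) := by
        apply Real.strictMonoOn_sin _ _ h2
        · constructor <;> [linarith [Real.pi_pos]; linarith]
        · constructor <;> [linarith [Real.pi_pos]; linarith]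
      simpa using this
  · rintro ⟨h1, h2⟩
    refine ⟨Real.arcsin u, ⟨Real.arcsin_pos.mpr h1, Real.arcsin_lt_pi_div_two.mpr h2⟩, ?_⟩
    exact Real.sin_arcsin (by linarith) (by linarith)

lemma sin_injOn : Set.InjOn Real.sin (Set.Ioo 0 (π/2)) := by
  apply Real.injOn_sin.mono
  intro θ hθ
  exact ⟨by linarith [hθ.1, Real.pi_pos], hθ.2.le⟩

theorem integral_arsinh_sq_div_sqrt :
    ∫ u in (0:ℝ)..1, (1 / 2) * (Real.arsinh u) ^ 2 / Real.sqrt (1 - u ^ 2) =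
      Real.pi ^ 3 / 96 := by
  set f : ℝ → ℝ := fun u => (1/2) * (Real.arsinh u)^2 / Real.sqrt (1 - u^2) with hf
  have pi2 : (0:ℝ) < π/2 := by linarith [Real.pi_pos]
  -- change of variables
  have hcv : ∫ u in Set.Ioo (0:ℝ) 1, f u
      = ∫ θ in Set.Ioo (0:ℝ) (π/2), |Real.cos θ| • f (Real.sin θ) := by
    rw [← sin_image]
    exact integral_image_eq_integral_abs_deriv_smul measurableSet_Ioo
      (fun θ _ => (Real.hasDerivAt_sin θ).hasDerivWithinAt) sin_injOn f
  -- simplify the integrand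
  have hsimp : ∀ θ ∈ Set.Ioo (0:ℝ) (π/2),
      |Real.cos θ| • f (Real.sin θ) = ∑' n : ℕ, (1/2) * (cc n * Real.sin θ ^ (2*n+2)) := by
    intro θ hθ
    have hcos : 0 < Real.cos θ := Real.cos_pos_of_mem_Ioo
      ⟨by linarith [hθ.1, Real.pi_pos], hθ.2⟩
    have hsin0 : 0 < Real.sin θ := Real.sin_pos_of_pos_of_lt_pi hθ.1
      (hθ.2.trans (by linarith [Real.pi_pos]))
    have hsin1 : Real.sin θ < 1 := by
      have : Real.sin θ < Real.sin (π/2) := by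
        apply Real.strictMonoOn_sin _ _ hθ.2
        · exact ⟨by linarith [hθ.1, Real.pi_pos], hθ.2.le⟩
        · exact ⟨by linarith [Real.pi_pos], le_refl _⟩
      simpa using this
    have habs : |Real.sin θ| < 1 := by rw [abs_of_pos hsin0]; exact hsin1
    have hsqrt : Real.sqrt (1 - Real.sin θ^2) = Real.cos θ := by
      rw [show (1:ℝ) - Real.sin θ^2 = Real.cos θ^2 by
            have := Real.sin_sq_add_cos_sq θ; linarith]
      exact Real.sqrt_sq hcos.le
    rw [tsum_mul_left]
    show |Real.cos θ| • f (Real.sin θ) = (1/2) * gg (Real.sin θ)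
    rw [gg_eq habs, hf]
    simp only [smul_eq_mul, abs_of_pos hcos, hsqrt]
    field_simp
  -- per-term integrals of sin powers over Ioo
  have hsin_int : ∀ m : ℕ, ∫ θ in Set.Ioo (0:ℝ) (π/2), Real.sin θ ^ (2*m) = (π/2) * W m := by
    intro m
    rw [← MeasureTheory.integral_Ioc_eq_integral_Ioo, ← intervalIntegral.integral_of_le pi2.le]
    exact integral_sin_pow_halfpi m
  set F : ℕ → ℝ → ℝ := fun n θ => (1/2) * (cc n * Real.sin θ ^ (2*n+2)) with hFdef
  have hFint : ∀ n, Integrable (F n) (volume.restrict (Set.Ioo (0:ℝ) (π/2))) := by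
    intro n
    have hc : Continuous (F n) := by fun_prop
    exact (hc.integrableOn_Icc).mono_set Set.Ioo_subset_Icc_self
  have hFnorm : ∀ n θ, ‖F n θ‖ = |(1/2) * cc n| * Real.sin θ ^ (2*(n+1)) := by
    intro n θ
    have hnn : (0:ℝ) ≤ Real.sin θ ^ (2*n+2) := by
      rw [show 2*n+2 = (n+1)*2 by ring, pow_mul]
      positivity
    rw [hFdef]
    simp only [norm_mul, Real.norm_eq_abs, abs_mul]
    rw [abs_of_nonneg hnn, show 2*(n+1) = 2*n+2 by ring]
    ring
  have hnormint : ∀ n, (∫ θ in Set.Ioo (0:ℝ) (π/2), ‖F n θ‖)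
      = π/(8*((n:ℝ)+1)^2) := by
    intro n
    simp_rw [hFnorm]
    rw [MeasureTheory.integral_const_mul, hsin_int (n+1)]
    have h1 := abs_cc_mul_W n
    have h3 : (0:ℝ) < ((n:ℝ)+1)^2 := by positivity
    calc |(1/2)*cc n| * ((π/2) * W (n+1)) = (π/4) * (|cc n| * W (n+1)) := by
          rw [abs_mul, abs_of_pos (by norm_num : (0:ℝ) < 1/2)]; ring
    _ = (π/4) * (1/(2*((n:ℝ)+1)^2)) := by rw [h1]
    _ = π/(8*((n:ℝ)+1)^2) := by rw [mul_one_div, div_div]; congr 1; ring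
  have hsum_norm : Summable (fun n => ∫ θ in Set.Ioo (0:ℝ) (π/2), ‖F n θ‖) := by
    have base : Summable (fun n : ℕ => (1:ℝ)/((n:ℝ))^2) :=
      (Real.summable_one_div_nat_pow).mpr one_lt_two
    have base1 : Summable (fun n : ℕ => (1:ℝ)/((n:ℝ)+1)^2) := by
      have := (summable_nat_add_iff (f := fun n : ℕ => (1:ℝ)/((n:ℝ))^2) 1).mpr base
      refine this.congr fun n => by push_cast; ring
    have := base1.mul_left (π/8)
    refine this.congr fun n => ?_
    rw [hnormint n]
    field_simp
  have hswap := MeasureTheory.integral_tsum_of_summable_integral_norm hFint hsum_norm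
  -- assemble
  have hfinal : ∑' n : ℕ, (∫ θ in Set.Ioo (0:ℝ) (π/2), F n θ) = π^3/96 := by
    have hterm : ∀ n : ℕ, (∫ θ in Set.Ioo (0:ℝ) (π/2), F n θ)
        = (π/8) * ((-1:ℝ)^n / ((n:ℝ)+1)^2) := by
      intro n
      rw [hFdef]
      simp only []
      rw [MeasureTheory.integral_const_mul, MeasureTheory.integral_const_mul]
      have hs := hsin_int (n+1)
      rw [show 2*(n+1) = 2*n+2 by ring] at hs
      rw [hs]
      have h := cc_mul_W n
      calc (1:ℝ)/2 * (cc n * (π/2 * W (n+1))) = (π/4) * (cc n * W (n+1)) := by ring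
      _ = (π/4) * ((-1:ℝ)^n / (2*((n:ℝ)+1)^2)) := by rw [h]
      _ = (π/8) * ((-1:ℝ)^n / ((n:ℝ)+1)^2) := by
          have h3 : (0:ℝ) < ((n:ℝ)+1)^2 := by positivity
          field_simp
          ring
    rw [tsum_congr hterm, tsum_mul_left, alt_sum.tsum_eq]
    ring
  calc (∫ u in (0:ℝ)..1, f u) = ∫ u in Set.Ioc (0:ℝ) 1, f u :=
        intervalIntegral.integral_of_le (by norm_num)
    _ = ∫ u in Set.Ioo (0:ℝ) 1, f u := MeasureTheory.integral_Ioc_eq_integral_Ioo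
    _ = ∫ θ in Set.Ioo (0:ℝ) (π/2), |Real.cos θ| • f (Real.sin θ) := hcv
    _ = ∫ θ in Set.Ioo (0:ℝ) (π/2), ∑' n : ℕ, F n θ :=
        MeasureTheory.setIntegral_congr_fun measurableSet_Ioo hsimp
    _ = ∑' n : ℕ, ∫ θ in Set.Ioo (0:ℝ) (π/2), F n θ := hswap.symm
    _ = π^3/96 := hfinal
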